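/- arXiv:1302.3494 — 2 statements merged into one kernel-verified Lean document; each statement's English description precedes it below -/
import Mathlib

section
/- Let r, d ≥ 1 and let x_1,...,x_r and p_1,...,p_r be integers in {0,...,d-1}. Then (x_1,...,x_r) ≠ (p_1,...,p_r) if and only if there exist s_1,...,s_r ∈ {0,...,d-1} and t_1,...,t_r ∈ {0,1} such that x_i = p_i + s_i - d·t_i for all i, and Σ_i s_i ≥ 1. -/
/-- Subtraction of base-`d` digits with a borrow: `s` is the digit of `x - p` and `t` the borrow. -/
lemma exists_digit_sub_with_borrow {d x p : ℤ}
    (hx : 0 ≤ x ∧ x ≤ d - 1) (hp : 0 ≤ p ∧ p ≤ d - 1) :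
    ∃ s t : ℤ, (0 ≤ s ∧ s ≤ d - 1) ∧ (t = 0 ∨ t = 1) ∧ x = p + s - d * t ∧ (x ≠ p → 1 ≤ s) := by
  by_cases hpx : p ≤ x
  · exact ⟨x - p, 0, by omega, by omega, by ring, by omega⟩
  · exact ⟨x - p + d, 1, by omega, by omega, by ring, by omega⟩

lemma digit_eq_zero_of_add_sub_mul_eq_self {d p s t : ℤ}
    (hs : 0 ≤ s ∧ s ≤ d - 1) (ht : t = 0 ∨ t = 1) (h : p = p + s - d * t) : s = 0 := by
  rcases ht with rfl | rfl <;> omega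

theorem stmt_11_general (r : ℕ) (d : ℤ)
    (x p : Fin r → ℤ)
    (hx : ∀ i, 0 ≤ x i ∧ x i ≤ d - 1) (hp : ∀ i, 0 ≤ p i ∧ p i ≤ d - 1) :
    x ≠ p ↔ ∃ s t : Fin r → ℤ,
      (∀ i, 0 ≤ s i ∧ s i ≤ d - 1) ∧ (∀ i, t i = 0 ∨ t i = 1) ∧
      (∀ i, x i = p i + s i - d * t i) ∧ 1 ≤ ∑ i, s i := by
  constructor
  · intro hne
    choose s t hs ht heq hpos using fun i => exists_digit_sub_with_borrow (hx i) (hp i)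
    obtain ⟨j, hj⟩ := Function.ne_iff.mp hne
    refine ⟨s, t, hs, ht, heq, ?_⟩
    calc 1 ≤ s j := hpos j hj
      _ ≤ ∑ i, s i := Finset.single_le_sum (fun i _ => (hs i).1) (Finset.mem_univ j)
  · rintro ⟨s, t, hs, ht, heq, hsum⟩ rfl
    have hzero : ∀ i, s i = 0 := fun i =>
      digit_eq_zero_of_add_sub_mul_eq_self (hs i) (ht i) (heq i)
    simp [hzero] at hsum

theorem stmt_11 (r : ℕ) (hr : 1 ≤ r) (d : ℤ) (hd : 1 ≤ d)
    (x p : Fin r → ℤ)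
    (hx : ∀ i, 0 ≤ x i ∧ x i ≤ d - 1) (hp : ∀ i, 0 ≤ p i ∧ p i ≤ d - 1) :
    x ≠ p ↔ ∃ s t : Fin r → ℤ,
      (∀ i, 0 ≤ s i ∧ s i ≤ d - 1) ∧ (∀ i, t i = 0 ∨ t i = 1) ∧
      (∀ i, x i = p i + s i - d * t i) ∧ 1 ≤ ∑ i, s i :=
  stmt_11_general r d x p hx hp
end

section
/- Let ℓ ≥ 1, t = 2^ℓ, s ∈ {0,...,t-1}, and let s_0,...,s_{ℓ-1} ∈ {0,1} satisfy s = Σ_{i<ℓ} 2^i s_i. Suppose integers s_ij ∈ {0,1} (for i,j < ℓ) and r satisfy 2·s_ij = s_i + s_j - d_ij for some d_ij ∈ {0,1}, and r = Σ_{i<ℓ} Σ_{j<ℓ} 2^{i+j}·s_ij. Then r = s². -/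
/-!
Each constraint `2 s_ij = s_i + s_j - d_ij` on bits forces `s_ij = s_i s_j`: the parity of the
right-hand side pins down `d_ij`, and then `s_ij` is the AND of the two bits. Hence `r` is the
expansion of `(∑ 2^i s_i)^2` as a double sum.
-/

open Finset

theorem eq_mul_of_two_mul_eq_add_sub {a b c d : ℤ} (ha : a = 0 ∨ a = 1) (hb : b = 0 ∨ b = 1)
    (hd : d = 0 ∨ d = 1) (h : 2 * c = a + b - d) : c = a * b := by
  rcases ha with rfl | rfl <;> rcases hb with rfl | rfl <;> rcases hd with rfl | rfl <;> omega

theorem sq_sum_range_pow_mul {R : Type*} [CommSemiring R] (x : R) (a : ℕ → R) (n : ℕ) :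
    (∑ i ∈ range n, x ^ i * a i) ^ 2 =
      ∑ i ∈ range n, ∑ j ∈ range n, x ^ (i + j) * (a i * a j) := by
  rw [sq, sum_mul_sum]
  refine sum_congr rfl fun i _ => sum_congr rfl fun j _ => ?_
  ring

theorem stmt_13_general (ℓ : ℕ) (s : ℤ)
    (sd : ℕ → ℤ) (hbit : ∀ i < ℓ, sd i = 0 ∨ sd i = 1)
    (hexp : s = ∑ i ∈ Finset.range ℓ, 2 ^ i * sd i)
    (sij dij : ℕ → ℕ → ℤ)
    (hdij : ∀ i < ℓ, ∀ j < ℓ, dij i j = 0 ∨ dij i j = 1)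
    (hmul : ∀ i < ℓ, ∀ j < ℓ, 2 * sij i j = sd i + sd j - dij i j)
    (r : ℤ)
    (hrdef : r = ∑ i ∈ Finset.range ℓ, ∑ j ∈ Finset.range ℓ, 2 ^ (i + j) * sij i j) :
    r = s ^ 2 := by
  rw [hrdef, hexp, sq_sum_range_pow_mul]
  refine sum_congr rfl fun i hi => sum_congr rfl fun j hj => ?_
  rw [mem_range] at hi hj
  rw [eq_mul_of_two_mul_eq_add_sub (hbit i hi) (hbit j hj) (hdij i hi j hj) (hmul i hi j hj)]

theorem stmt_13 (ℓ : ℕ) (hℓ : 1 ≤ ℓ) (s : ℤ) (hs0 : 0 ≤ s) (hs : s < 2 ^ ℓ)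
    (sd : ℕ → ℤ) (hbit : ∀ i < ℓ, sd i = 0 ∨ sd i = 1)
    (hexp : s = ∑ i ∈ Finset.range ℓ, 2 ^ i * sd i)
    (sij dij : ℕ → ℕ → ℤ)
    (hsij : ∀ i < ℓ, ∀ j < ℓ, sij i j = 0 ∨ sij i j = 1)
    (hdij : ∀ i < ℓ, ∀ j < ℓ, dij i j = 0 ∨ dij i j = 1)
    (hmul : ∀ i < ℓ, ∀ j < ℓ, 2 * sij i j = sd i + sd j - dij i j)
    (r : ℤ)
    (hrdef : r = ∑ i ∈ Finset.range ℓ, ∑ j ∈ Finset.range ℓ, 2 ^ (i + j) * sij i j) :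
    r = s ^ 2 :=
  stmt_13_general ℓ s sd hbit hexp sij dij hdij hmul r hrdef
end
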